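/- Let T be a finite tree on vertex set V and let R be a request set on T. For each edge e = {u,v} of T let B_{uv} be the bipartite graph on the two components of T − e whose edges are the requests in R having one endpoint in each component, and let τ(B_{uv}) denote the minimum cardinality of a vertex cover of B_{uv}. Then the minimum cost of a dispersal of T satisfying R equals Σ_{e={u,v} ∈ E} τ(B_{uv}). -/

import Mathlib

open SimpleGraph Finset

/-- A dispersal `D` of `G` satisfies a request set `R` if for every request `{u,v} ∈ R`
there is a walk from `u` to `v` all of whose edges lie in `D u ∪ D v`. -/
def Satisfies {V : Type*} (G : SimpleGraph V) (D : V → Finset (Sym2 V))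
    (R : Set (Sym2 V)) : Prop :=
  ∀ u v : V, s(u, v) ∈ R → ∃ p : G.Walk u v, ∀ e ∈ p.edges, e ∈ D u ∨ e ∈ D v

/-- `D` is a dispersal of `G`: every assigned edge is an edge of `G`. -/
def IsDispersal {V : Type*} (G : SimpleGraph V) (D : V → Finset (Sym2 V)) : Prop :=
  ∀ v : V, ∀ e ∈ D v, e ∈ G.edgeSet

/-- The cost of a dispersal. -/
def cost {V : Type*} [Fintype V] (D : V → Finset (Sym2 V)) : ℕ :=
  ∑ v, (D v).card

/-- An edge set `S` connects a terminal set `T` if any two vertices of `T` are joined by a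
walk in `G` using only edges of `S`. -/
def Connects {V : Type*} (G : SimpleGraph V) (S : Finset (Sym2 V)) (T : Finset V) : Prop :=
  ∀ a ∈ T, ∀ b ∈ T, ∃ p : G.Walk a b, ∀ e ∈ p.edges, e ∈ S

/-- The star request set with center `vr` and leaf set `T \ {vr}`. -/
def starR {V : Type*} (vr : V) (T : Finset V) : Set (Sym2 V) :=
  {e | ∃ u ∈ T, u ≠ vr ∧ e = s(vr, u)}

/-- The minimum cost of a dispersal of `G` satisfying `R`. -/
noncomputable def cmin {V : Type*} [Fintype V] (G : SimpleGraph V) (R : Set (Sym2 V)) : ℕ :=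
  sInf {c | ∃ D : V → Finset (Sym2 V), IsDispersal G D ∧ Satisfies G D R ∧ cost D = c}

/-- `C` is a vertex cover of the graph `B`: every edge of `B` is incident to a vertex
of `C`. -/
def IsVertexCover {V : Type*} (B : SimpleGraph V) (C : Set V) : Prop :=
  ∀ a b : V, B.Adj a b → a ∈ C ∨ b ∈ C

/-- The bipartite graph `B_{uv}` associated with the tree edge `e = {u,v}`: its edges are
the requests of `R` whose endpoints lie in the two different components of the tree with
the edge `e` deleted. -/
def Buv' {V : Type*} (G : SimpleGraph V) (R : Set (Sym2 V)) (e : Sym2 V) : SimpleGraph V :=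
  SimpleGraph.fromEdgeSet {f | f ∈ R ∧ ∃ a b : V, f = s(a, b) ∧
    ¬ (G.deleteEdges {e}).Reachable a b}

/-- `τ B`: the minimum cardinality of a vertex cover of `B`. -/
noncomputable def tau {V : Type*} (B : SimpleGraph V) : ℕ :=
  sInf {k | ∃ C : Finset V, _root_.IsVertexCover B ↑C ∧ C.card = k}


/-!
For a dispersal `D` and a tree edge `e`, the vertices `v` with `e ∈ D v` form a vertex cover
of `B_e`: a request separated by `e` is served by a walk that must cross `e`. Summing over the
edges and double counting gives `Σ_e τ(B_e) ≤ c(D)`. Conversely, from minimum vertex covers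
`C_e` put `e` into `D v` exactly when `v ∈ C_e`; this costs `Σ_e τ(B_e)`, and it satisfies a
request `{a, b}` along the unique `a`–`b` path of the tree, since every edge of that path
separates `a` from `b`, so `a` or `b` lies in its cover.
-/

namespace SimpleGraph

variable {V : Type*} {G : SimpleGraph V}

theorem IsAcyclic.not_reachable_deleteEdges_of_mem_edges [DecidableEq V] (hG : G.IsAcyclic)
    {a b : V} (p : G.Path a b) {f : Sym2 V} (hf : f ∈ (p : G.Walk a b).edges) :
    ¬ (G.deleteEdges {f}).Reachable a b := by
  rintro ⟨q⟩
  let q' : G.Walk a b := q.mapLe (G.deleteEdges_le {f})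
  have hpq : p = q'.toPath := (hG.subsingleton_path a b).elim _ _
  have hfq : f ∈ q.edges := by
    rw [← Walk.edges_mapLe_eq_edges (G.deleteEdges_le {f})]
    exact q'.edges_toPath_subset_edges (hpq ▸ hf)
  have := q.edges_subset_edgeSet hfq
  rw [edgeSet_deleteEdges] at this
  exact this.2 rfl

theorem Buv'_adj {R : Set (Sym2 V)} {e : Sym2 V} {a b : V} :
    (Buv' G R e).Adj a b ↔ s(a, b) ∈ R ∧ ¬ (G.deleteEdges {e}).Reachable a b ∧ a ≠ b := by
  rw [Buv', fromEdgeSet_adj]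
  constructor
  · rintro ⟨⟨hR, a', b', hab, hsep⟩, hne⟩
    refine ⟨hR, ?_, hne⟩
    rcases Sym2.eq_iff.mp hab with ⟨rfl, rfl⟩ | ⟨rfl, rfl⟩
    exacts [hsep, fun h => hsep h.symm]
  · rintro ⟨hR, hsep, hne⟩
    exact ⟨⟨hR, a, b, rfl, hsep⟩, hne⟩

end SimpleGraph

open SimpleGraph

section VertexCover

variable {V : Type*}

theorem exists_isVertexCover_card_eq_tau [Fintype V] (B : SimpleGraph V) :
    ∃ C : Finset V, _root_.IsVertexCover B ↑C ∧ C.card = tau B :=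
  Nat.sInf_mem (s := {k | ∃ C : Finset V, _root_.IsVertexCover B ↑C ∧ C.card = k})
    ⟨_, univ, fun a _ _ => Or.inl (mem_univ a), rfl⟩

theorem tau_le_card {B : SimpleGraph V} {C : Finset V} (h : _root_.IsVertexCover B ↑C) :
    tau B ≤ C.card :=
  Nat.sInf_le ⟨C, h, rfl⟩

end VertexCover

section Cost

variable {V : Type*} [Fintype V] {G : SimpleGraph V} {R : Set (Sym2 V)}

theorem cmin_le {D : V → Finset (Sym2 V)} (hD : IsDispersal G D) (hS : Satisfies G D R) :
    cmin G R ≤ cost D :=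
  Nat.sInf_le ⟨D, hD, hS, rfl⟩

theorem exists_cost_eq_cmin {D : V → Finset (Sym2 V)} (hD : IsDispersal G D)
    (hS : Satisfies G D R) : ∃ D', IsDispersal G D' ∧ Satisfies G D' R ∧ cost D' = cmin G R :=
  Nat.sInf_mem (s := {c | ∃ D, IsDispersal G D ∧ Satisfies G D R ∧ cost D = c})
    ⟨_, D, hD, hS, rfl⟩

variable [DecidableEq V]

theorem isVertexCover_filter_mem {D : V → Finset (Sym2 V)} (hS : Satisfies G D R)
    (e : Sym2 V) : _root_.IsVertexCover (Buv' G R e) ↑({v | e ∈ D v} : Finset V) := by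
  intro a b hab
  obtain ⟨hR, hsep, -⟩ := Buv'_adj.mp hab
  obtain ⟨p, hp⟩ := hS a b hR
  simpa using hp e (p.mem_edges_of_not_reachable_deleteEdges hsep)

variable [Fintype G.edgeSet]

theorem cost_eq_sum_card_filter_mem {D : V → Finset (Sym2 V)} (hD : IsDispersal G D) :
    cost D = ∑ e ∈ G.edgeFinset, #{v | e ∈ D v} := by
  have hfilter : ∀ v, {e ∈ G.edgeFinset | e ∈ D v} = D v := fun v =>
    filter_mem_eq_inter.trans (inter_eq_right.mpr fun e he => mem_edgeFinset.mpr (hD v e he))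
  calc cost D = ∑ v, #{e ∈ G.edgeFinset | e ∈ D v} := sum_congr rfl fun v _ => by rw [hfilter]
    _ = _ := sum_card_bipartiteAbove_eq_sum_card_bipartiteBelow _

theorem sum_tau_le_cost {D : V → Finset (Sym2 V)} (hD : IsDispersal G D)
    (hS : Satisfies G D R) : ∑ e ∈ G.edgeFinset, tau (Buv' G R e) ≤ cost D := by
  rw [cost_eq_sum_card_filter_mem hD]
  exact sum_le_sum fun e _ => tau_le_card (isVertexCover_filter_mem hS e)

end Cost

section Construction

variable {V : Type*} [DecidableEq V] {G : SimpleGraph V} [Fintype G.edgeSet] {R : Set (Sym2 V)}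

variable (G) in
def dispersalOfCovers (C : Sym2 V → Finset V) (v : V) : Finset (Sym2 V) :=
  {e ∈ G.edgeFinset | v ∈ C e}

theorem isDispersal_dispersalOfCovers (C : Sym2 V → Finset V) :
    IsDispersal G (dispersalOfCovers G C) :=
  fun _ _ he => mem_edgeFinset.mp (mem_filter.mp he).1

theorem cost_dispersalOfCovers [Fintype V] (C : Sym2 V → Finset V) :
    cost (dispersalOfCovers G C) = ∑ e ∈ G.edgeFinset, #(C e) := by
  rw [cost_eq_sum_card_filter_mem (isDispersal_dispersalOfCovers C)]
  refine sum_congr rfl fun e he => congrArg card ?_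
  ext v
  simp [dispersalOfCovers, he]

theorem satisfies_dispersalOfCovers (hT : G.IsTree) {C : Sym2 V → Finset V}
    (hC : ∀ e ∈ G.edgeSet, _root_.IsVertexCover (Buv' G R e) ↑(C e)) :
    Satisfies G (dispersalOfCovers G C) R := by
  intro a b hR
  by_cases hab : a = b
  · subst hab
    exact ⟨Walk.nil, by simp⟩
  obtain ⟨w⟩ := hT.connected.preconnected a b
  refine ⟨w.toPath, fun f hf => ?_⟩
  have hfG := Walk.edges_subset_edgeSet _ hf
  have hsep := hT.isAcyclic.not_reachable_deleteEdges_of_mem_edges w.toPath hf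
  simpa [dispersalOfCovers, hfG] using hC f hfG a b (Buv'_adj.mpr ⟨hR, hsep, hab⟩)

end Construction

open scoped Classical in
theorem stmt13 {V : Type*} [Fintype V] (G : SimpleGraph V) (hT : G.IsTree)
    (R : Set (Sym2 V)) :
    cmin G R = ∑ e ∈ G.edgeFinset, tau (Buv' G R e) := by
  choose C hC hcard using fun e => exists_isVertexCover_card_eq_tau (Buv' G R e)
  have hDC := isDispersal_dispersalOfCovers (G := G) C
  have hSC := satisfies_dispersalOfCovers hT (R := R) fun e _ => hC e
  obtain ⟨D, hD, hS, hcost⟩ := exists_cost_eq_cmin hDC hSC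
  refine le_antisymm ?_ (hcost ▸ sum_tau_le_cost hD hS)
  calc cmin G R ≤ cost (dispersalOfCovers G C) := cmin_le hDC hSC
    _ = ∑ e ∈ G.edgeFinset, tau (Buv' G R e) := by
      rw [cost_dispersalOfCovers]
      exact sum_congr rfl fun e _ => hcard e
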